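/- For a trace-free symmetric endomorphism W of a 3-dimensional real inner product space and any vector ψ, one has ⟨W(ψ), ψ⟩ ≤ √(2/3)·‖W‖·‖ψ‖², where ‖W‖ is the Frobenius norm. -/

import Mathlib

/-!
Diagonalise `W` in an orthonormal eigenbasis with eigenvalues `μ₁, μ₂, μ₃`. Then `tr W = ∑ μᵢ = 0`,
`tr (W ∘ W) = ∑ μᵢ²` and `⟨W ψ, ψ⟩ ≤ (maxᵢ μᵢ) ‖ψ‖²`. Since `μᵢ` is minus the sum of the other two
eigenvalues, Cauchy–Schwarz gives `μᵢ² ≤ 2 (∑ μⱼ² - μᵢ²)`, i.e. `μᵢ² ≤ (2/3) ∑ μⱼ²`.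
-/

open Finset
open scoped RealInnerProductSpace

theorem mul_sq_le_of_sum_eq_zero {ι : Type*} [Fintype ι] [DecidableEq ι] {f : ι → ℝ}
    (hf : ∑ j, f j = 0) (i : ι) :
    Fintype.card ι * f i ^ 2 ≤ (Fintype.card ι - 1) * ∑ j, f j ^ 2 := by
  have hsplit : ∀ g : ι → ℝ, g i + ∑ j ∈ univ.erase i, g j = ∑ j, g j :=
    fun g ↦ add_sum_erase _ g (mem_univ i)
  have hcard : ((univ.erase i).card : ℝ) = Fintype.card ι - 1 := by
    rw [card_erase_of_mem (mem_univ i), card_univ, Nat.cast_pred (Fintype.card_pos_iff.mpr ⟨i⟩)]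
  have hfi : f i = -∑ j ∈ univ.erase i, f j := by linarith [hsplit f]
  have hcs : f i ^ 2 ≤ (Fintype.card ι - 1) * ∑ j ∈ univ.erase i, f j ^ 2 := by
    rw [hfi, neg_sq, ← hcard]
    exact sq_sum_le_card_mul_sum_sq
  have hrest : ∑ j ∈ univ.erase i, f j ^ 2 = ∑ j, f j ^ 2 - f i ^ 2 := by
    linarith [hsplit (f · ^ 2)]
  rw [hrest] at hcs
  linear_combination hcs

theorem le_sqrt_mul_sqrt_sum_sq_of_sum_eq_zero {ι : Type*} [Fintype ι] {f : ι → ℝ}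
    (hf : ∑ j, f j = 0) (i : ι) :
    f i ≤ √((Fintype.card ι - 1) / Fintype.card ι) * √(∑ j, f j ^ 2) := by
  classical
  have hcard : (0 : ℝ) < Fintype.card ι := Nat.cast_pos.mpr (Fintype.card_pos_iff.mpr ⟨i⟩)
  have hsq : f i ^ 2 ≤ (Fintype.card ι - 1) / Fintype.card ι * ∑ j, f j ^ 2 := by
    rw [div_mul_eq_mul_div, le_div_iff₀ hcard, mul_comm]
    exact mul_sq_le_of_sum_eq_zero hf i
  rw [← Real.sqrt_mul' _ (sum_nonneg fun j _ ↦ sq_nonneg (f j))]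
  exact Real.le_sqrt_of_sq_le hsq

namespace LinearMap.IsSymmetric

variable {E : Type*} [NormedAddCommGroup E] [InnerProductSpace ℝ E] [FiniteDimensional ℝ E]
  {n : ℕ} {T : E →ₗ[ℝ] E}

theorem trace_comp_self_eq_sum_sq_eigenvalues (hT : T.IsSymmetric) (hn : Module.finrank ℝ E = n) :
    trace ℝ E (T ∘ₗ T) = ∑ i, hT.eigenvalues hn i ^ 2 := by
  rw [trace_eq_sum_inner _ (hT.eigenvectorBasis hn)]
  refine sum_congr rfl fun i _ ↦ ?_
  rw [comp_apply, ← hT, hT.apply_eigenvectorBasis, real_inner_smul_left, real_inner_smul_right,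
    real_inner_self_eq_norm_sq, (hT.eigenvectorBasis hn).orthonormal.1 i, RCLike.ofReal_real_eq_id,
    id_eq]
  ring

theorem inner_apply_self_le_of_eigenvalues_le (hT : T.IsSymmetric) (hn : Module.finrank ℝ E = n)
    {c : ℝ} (hc : ∀ i, hT.eigenvalues hn i ≤ c) (x : E) : ⟪T x, x⟫ ≤ c * ‖x‖ ^ 2 := by
  set b := hT.eigenvectorBasis hn
  calc ⟪T x, x⟫ = ∑ i, hT.eigenvalues hn i * ⟪b i, x⟫ ^ 2 := by
        rw [← b.sum_inner_mul_inner]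
        refine sum_congr rfl fun i _ ↦ ?_
        rw [hT, hT.apply_eigenvectorBasis, real_inner_smul_right, real_inner_comm x,
          RCLike.ofReal_real_eq_id, id_eq]
        ring
    _ ≤ ∑ i, c * ⟪b i, x⟫ ^ 2 := by gcongr with i; exact hc i
    _ = c * ‖x‖ ^ 2 := by rw [← mul_sum, b.sum_sq_inner_right]

theorem inner_apply_self_le_of_trace_eq_zero (hT : T.IsSymmetric) (hn : Module.finrank ℝ E = n)
    (htr : trace ℝ E T = 0) (x : E) :
    ⟪T x, x⟫ ≤ √((n - 1) / n) * √(trace ℝ E (T ∘ₗ T)) * ‖x‖ ^ 2 := by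
  refine hT.inner_apply_self_le_of_eigenvalues_le hn (fun i ↦ ?_) x
  have hsum : ∑ j, hT.eigenvalues hn j = 0 := by
    simpa [htr] using (hT.trace_eq_sum_eigenvalues hn).symm
  simpa [hT.trace_comp_self_eq_sum_sq_eigenvalues hn] using
    le_sqrt_mul_sqrt_sum_sq_of_sum_eq_zero hsum i

end LinearMap.IsSymmetric

/-- For a trace-free symmetric endomorphism `W` of a 3-dimensional real inner
product space and any vector `ψ`: `⟨W ψ, ψ⟩ ≤ √(2/3)·‖W‖·‖ψ‖²`, where
`‖W‖ = √(tr(W ∘ W))` is the Frobenius norm. -/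
theorem stmt_1 {V : Type*} [NormedAddCommGroup V] [InnerProductSpace ℝ V]
    [FiniteDimensional ℝ V] (hdim : Module.finrank ℝ V = 3)
    (W : V →ₗ[ℝ] V) (hsym : W.IsSymmetric)
    (htr : LinearMap.trace ℝ V W = 0) (ψ : V) :
    inner ℝ (W ψ) ψ ≤ Real.sqrt (2 / 3) * Real.sqrt (LinearMap.trace ℝ V (W ∘ₗ W)) * ‖ψ‖ ^ 2 := by
  convert hsym.inner_apply_self_le_of_trace_eq_zero hdim htr ψ using 4
  norm_num
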